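/- arXiv:1308.0742 — 5 statements merged into one kernel-verified Lean document; each statement's English description precedes it below -/
import Mathlib

section
/- Let M be a metric space such that for all x, y ∈ M and every ε > 0 there exists a continuous path γ : [0,1] → M with γ(0) = x, γ(1) = y which is Lipschitz with constant dist(x,y) + ε (M is an approximate length space). Let A, B ⊆ M be closed subsets with A ∪ B = M. Then for all x ∈ A and y ∈ B one has infDist(x, A ∩ B) + infDist(y, A ∩ B) ≤ dist(x, y). -/
open Set Metric

theorem ContinuousOn.exists_mem_inter_of_isClosed {X Y : Type*} [TopologicalSpace X]
    [TopologicalSpace Y] {γ : X → Y} {s : Set X} {A B : Set Y} (hs : IsPreconnected s)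
    (hγ : ContinuousOn γ s) (hA : IsClosed A) (hB : IsClosed B) (hAB : A ∪ B = univ)
    {a b : X} (ha : a ∈ s) (hb : b ∈ s) (haA : γ a ∈ A) (hbB : γ b ∈ B) :
    ∃ c ∈ s, γ c ∈ A ∩ B := by
  obtain ⟨_, ⟨c, hc, rfl⟩, hcAB⟩ := isPreconnected_closed_iff.mp (hs.image γ hγ) A B hA hB
    (by simp [hAB]) ⟨γ a, mem_image_of_mem γ ha, haA⟩ ⟨γ b, mem_image_of_mem γ hb, hbB⟩
  exact ⟨c, hc, hcAB⟩

theorem dist_add_dist_le_of_dist_le_mul_abs_sub {M : Type*} [PseudoMetricSpace M] {γ : ℝ → M}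
    {K : ℝ} (hγ : ∀ s ∈ Icc (0:ℝ) 1, ∀ t ∈ Icc (0:ℝ) 1, dist (γ s) (γ t) ≤ K * |s - t|)
    {c : ℝ} (hc : c ∈ Icc (0:ℝ) 1) :
    dist (γ 0) (γ c) + dist (γ c) (γ 1) ≤ K := by
  have h0 : (0:ℝ) ∈ Icc (0:ℝ) 1 := left_mem_Icc.mpr zero_le_one
  have h1 : (1:ℝ) ∈ Icc (0:ℝ) 1 := right_mem_Icc.mpr zero_le_one
  calc dist (γ 0) (γ c) + dist (γ c) (γ 1)
      ≤ K * |0 - c| + K * |c - 1| := add_le_add (hγ 0 h0 c hc) (hγ c hc 1 h1)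
    _ = K := by
      rw [abs_of_nonpos (by linarith [hc.1]), abs_of_nonpos (by linarith [hc.2])]
      ring

/-- In an approximate length space `M` decomposed as `M = A ∪ B` into closed
subsets, points `x ∈ A`, `y ∈ B` satisfy
`infDist x (A ∩ B) + infDist y (A ∩ B) ≤ dist x y`. -/
theorem stmt1 {M : Type*} [MetricSpace M]
    (hlen : ∀ x y : M, ∀ ε : ℝ, 0 < ε → ∃ γ : ℝ → M,
      ContinuousOn γ (Set.Icc 0 1) ∧ γ 0 = x ∧ γ 1 = y ∧
      ∀ s ∈ Set.Icc (0:ℝ) 1, ∀ t ∈ Set.Icc (0:ℝ) 1,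
        dist (γ s) (γ t) ≤ (dist x y + ε) * |s - t|)
    (A B : Set M) (hA : IsClosed A) (hB : IsClosed B) (hAB : A ∪ B = Set.univ) :
    ∀ x ∈ A, ∀ y ∈ B,
      Metric.infDist x (A ∩ B) + Metric.infDist y (A ∩ B) ≤ dist x y := by
  intro x hx y hy
  refine le_of_forall_pos_le_add fun ε hε => ?_
  obtain ⟨γ, hcont, rfl, rfl, hlip⟩ := hlen x y ε hε
  obtain ⟨c, hc, hcAB⟩ := hcont.exists_mem_inter_of_isClosed isPreconnected_Icc hA hB hAB
    (left_mem_Icc.mpr zero_le_one) (right_mem_Icc.mpr zero_le_one) hx hy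
  calc infDist (γ 0) (A ∩ B) + infDist (γ 1) (A ∩ B)
      ≤ dist (γ 0) (γ c) + dist (γ c) (γ 1) := by
        rw [dist_comm (γ c)]
        exact add_le_add (infDist_le_dist_of_mem hcAB) (infDist_le_dist_of_mem hcAB)
    _ ≤ dist (γ 0) (γ 1) + ε := dist_add_dist_le_of_dist_le_mul_abs_sub hlip hc
end

section
/- Let M be a metric space, let M_1, …, M_q be nonempty subsets of M and let N be a nonempty bounded subset such that M_1, …, M_q are coarsely transversal with respect to N: for every r > 0 there is s > 0 with ⋂_k U_r(M_k) ⊆ U_s(N). Let f : M → EuclideanSpace ℝ (Fin q) be a map satisfying |f(x)_k| = infDist(x, M_k) for all x ∈ M and all k. Then the preimage under f of every bounded subset of EuclideanSpace ℝ (Fin q) is bounded. -/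
open Metric

theorem Metric.mem_cthickening_of_infDist_le {α : Type*} [PseudoMetricSpace α] {x : α}
    {s : Set α} {δ : ℝ} (hs : s.Nonempty) (h : infDist x s ≤ δ) : x ∈ cthickening δ s := by
  rw [mem_cthickening_iff, ← ENNReal.ofReal_toReal (infEDist_ne_top hs)]
  exact ENNReal.ofReal_le_ofReal h

theorem preimage_closedBall_subset_iInter_cthickening {M : Type*} [PseudoMetricSpace M]
    {ι : Type*} [Fintype ι] {S : ι → Set M} (hS : ∀ k, (S k).Nonempty)
    {f : M → EuclideanSpace ℝ ι}
    (hf : ∀ x k, |f x k| = infDist x (S k)) (r : ℝ) :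
    f ⁻¹' closedBall 0 r ⊆ ⋂ k, cthickening r (S k) := by
  intro x hx
  refine Set.mem_iInter.2 fun k => mem_cthickening_of_infDist_le (hS k) ?_
  calc infDist x (S k) = ‖f x k‖ := (hf x k).symm
    _ ≤ ‖f x‖ := PiLp.norm_apply_le (f x) k
    _ ≤ r := mem_closedBall_zero_iff.1 hx

theorem stmt4_general {M : Type*} [MetricSpace M] (q : ℕ)
    (Msets : Fin q → Set M) (hMne : ∀ k, (Msets k).Nonempty)
    (N : Set M) (hNb : Bornology.IsBounded N)
    (hct : ∀ r : ℝ, 0 < r → ∃ s : ℝ, 0 < s ∧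
      (⋂ k, Metric.cthickening r (Msets k)) ⊆ Metric.cthickening s N)
    (f : M → EuclideanSpace ℝ (Fin q))
    (hf : ∀ x k, |f x k| = Metric.infDist x (Msets k)) :
    ∀ K : Set (EuclideanSpace ℝ (Fin q)), Bornology.IsBounded K →
      Bornology.IsBounded (f ⁻¹' K) := by
  intro K hK
  obtain ⟨r, hr, hKr⟩ := hK.subset_closedBall_lt 0 0
  obtain ⟨s, -, hsub⟩ := hct r hr
  refine (hNb.cthickening (δ := s)).subset ?_
  calc f ⁻¹' K ⊆ f ⁻¹' closedBall 0 r := Set.preimage_mono hKr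
    _ ⊆ ⋂ k, cthickening r (Msets k) :=
      preimage_closedBall_subset_iInter_cthickening hMne hf r
    _ ⊆ cthickening s N := hsub

/-- If the subsets `M_k` are coarsely transversal with respect to a nonempty
bounded set `N`, then any map `f : M → ℝ^q` whose coordinates have absolute
value the distance to `M_k` pulls back bounded sets to bounded sets. -/
theorem stmt4 {M : Type*} [MetricSpace M] (q : ℕ)
    (Msets : Fin q → Set M) (hMne : ∀ k, (Msets k).Nonempty)
    (N : Set M) (hNne : N.Nonempty) (hNb : Bornology.IsBounded N)
    (hct : ∀ r : ℝ, 0 < r → ∃ s : ℝ, 0 < s ∧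
      (⋂ k, Metric.cthickening r (Msets k)) ⊆ Metric.cthickening s N)
    (f : M → EuclideanSpace ℝ (Fin q))
    (hf : ∀ x k, |f x k| = Metric.infDist x (Msets k)) :
    ∀ K : Set (EuclideanSpace ℝ (Fin q)), Bornology.IsBounded K →
      Bornology.IsBounded (f ⁻¹' K) :=
  stmt4_general q Msets hMne N hNb hct f hf
end

section
/- Let M be a proper metric space (closed bounded sets are compact) which is an approximate length space: for all x, y ∈ M and ε > 0 there is a continuous path γ : [0,1] → M with γ(0) = x, γ(1) = y which is Lipschitz with constant dist(x,y) + ε. For each k ∈ Fin q let M_k⁺ and M_k⁻ be closed subsets with M_k⁺ ∪ M_k⁻ = M, set M_k := M_k⁺ ∩ M_k⁻ and N := ⋂_k M_k, and assume that N is nonempty and compact and that the M_k are coarsely transversal: for every r > 0 there is s > 0 with ⋂_k U_r(M_k) ⊆ U_s(N). Define h_k(x) = infDist(x, M_k) if x ∈ M_k⁺ and h_k(x) = −infDist(x, M_k) otherwise, and f : M → EuclideanSpace ℝ (Fin q), f(x) = (h_0(x), …, h_{q−1}(x)). Then f is Lipschitz with constant √q and f is a proper map, i.e. the preimage under f of every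 compact subset of EuclideanSpace ℝ (Fin q) is compact. -/
/-!
Each signed distance function `h_k` is 1-Lipschitz: across the partition, a path from `x ∈ M_k⁺`
to `y ∉ M_k⁺` of length about `dist x y` must meet `M_k⁺ ∩ M_k⁻` by connectedness, so the two
unsigned distances add up to at most `dist x y`. Hence `f` is `√q`-Lipschitz. If `f x` lies in the
ball of radius `r`, then `x` lies in every `U_r(M_k)`, hence by coarse transversality in the
compact set `U_s(N)`; so preimages of compact sets are closed subsets of compact sets.
-/

open Metric Set

section SignedDistance

variable {M : Type*} [PseudoMetricSpace M]

lemma infDist_add_infDist_le_of_path_mem {S : Set M} {x y : M} {γ : ℝ → M} {L t : ℝ}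
    (hγ : ∀ s ∈ Icc (0:ℝ) 1, ∀ t ∈ Icc (0:ℝ) 1, dist (γ s) (γ t) ≤ L * |s - t|)
    (hγ0 : γ 0 = x) (hγ1 : γ 1 = y) (ht : t ∈ Icc (0:ℝ) 1) (hγt : γ t ∈ S) :
    infDist x S + infDist y S ≤ L := by
  have hx : infDist x S ≤ L * t := by
    calc infDist x S ≤ dist (γ 0) (γ t) := hγ0 ▸ infDist_le_dist_of_mem hγt
      _ ≤ L * |0 - t| := hγ 0 (left_mem_Icc.2 zero_le_one) t ht
      _ = L * t := by rw [zero_sub, abs_neg, abs_of_nonneg ht.1]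
  have hy : infDist y S ≤ L * (1 - t) := by
    calc infDist y S ≤ dist (γ 1) (γ t) := hγ1 ▸ infDist_le_dist_of_mem hγt
      _ ≤ L * |1 - t| := hγ 1 (right_mem_Icc.2 zero_le_one) t ht
      _ = L * (1 - t) := by rw [abs_of_nonneg (sub_nonneg.2 ht.2)]
  linarith

lemma infDist_add_infDist_inter_le_dist {A B : Set M} (hA : IsClosed A) (hB : IsClosed B)
    (hAB : A ∪ B = univ) {x y : M}
    (hlen : ∀ ε : ℝ, 0 < ε → ∃ γ : ℝ → M,
      ContinuousOn γ (Icc 0 1) ∧ γ 0 = x ∧ γ 1 = y ∧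
      ∀ s ∈ Icc (0:ℝ) 1, ∀ t ∈ Icc (0:ℝ) 1, dist (γ s) (γ t) ≤ (dist x y + ε) * |s - t|)
    (hx : x ∈ A) (hy : y ∉ A) :
    infDist x (A ∩ B) + infDist y (A ∩ B) ≤ dist x y := by
  refine le_of_forall_pos_le_add fun ε hε => ?_
  obtain ⟨γ, hγc, hγ0, hγ1, hγ⟩ := hlen ε hε
  have hyB : y ∈ B := (hAB.symm ▸ mem_univ y : y ∈ A ∪ B).resolve_left hy
  obtain ⟨-, ⟨t, ht, rfl⟩, hγt⟩ := isPreconnected_closed_iff.1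
    (isPreconnected_Icc.image γ hγc) A B hA hB (hAB ▸ subset_univ _)
    ⟨x, ⟨0, left_mem_Icc.2 zero_le_one, hγ0⟩, hx⟩ ⟨y, ⟨1, right_mem_Icc.2 zero_le_one, hγ1⟩, hyB⟩
  exact infDist_add_infDist_le_of_path_mem hγ hγ0 hγ1 ht hγt

open Classical in
noncomputable def signedInfDist (A S : Set M) (x : M) : ℝ :=
  if x ∈ A then infDist x S else -infDist x S

variable {A S : Set M}

lemma abs_signedInfDist (x : M) : |signedInfDist A S x| = infDist x S := by
  unfold signedInfDist
  split_ifs <;> simp [abs_of_nonneg infDist_nonneg]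

lemma lipschitzWith_one_signedInfDist
    (hcross : ∀ x ∈ A, ∀ y ∉ A, infDist x S + infDist y S ≤ dist x y) :
    LipschitzWith 1 (signedInfDist A S) := by
  refine LipschitzWith.of_le_add fun x y => ?_
  unfold signedInfDist
  split_ifs with hx hy hy
  · exact infDist_le_infDist_add_dist
  · linarith [hcross x hx y hy]
  · linarith [infDist_nonneg (x := x) (s := S), infDist_nonneg (x := y) (s := S),
      dist_nonneg (x := x) (y := y)]
  · linarith [dist_comm x y ▸ infDist_le_infDist_add_dist (x := y) (y := x) (s := S)]

lemma mem_cthickening_of_infDist_le {δ : ℝ} {x : M} (hS : S.Nonempty) (hδ : 0 ≤ δ)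
    (hx : infDist x S ≤ δ) : x ∈ cthickening δ S := by
  rw [mem_cthickening_iff, ENNReal.le_ofReal_iff_toReal_le (infEDist_ne_top hS) hδ]
  exact hx

end SignedDistance

lemma EuclideanSpace.lipschitzWith_of_forall_apply {α ι : Type*} [PseudoMetricSpace α]
    [Fintype ι] {K : NNReal} {f : α → EuclideanSpace ℝ ι}
    (hf : ∀ i, LipschitzWith K fun x => f x i) :
    LipschitzWith (NNReal.sqrt (Fintype.card ι) * K) f := by
  refine LipschitzWith.of_dist_le_mul fun x y => ?_
  calc dist (f x) (f y) = √(∑ i, dist (f x i) (f y i) ^ 2) := EuclideanSpace.dist_eq _ _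
    _ ≤ √(∑ _i : ι, (K * dist x y) ^ 2) := by
        gcongr with i
        exact (hf i).dist_le_mul x y
    _ = √(Fintype.card ι) * (K * dist x y) := by
        rw [Finset.sum_const, Finset.card_univ, nsmul_eq_mul, Real.sqrt_mul (Nat.cast_nonneg _),
          Real.sqrt_sq (by positivity)]
    _ = (NNReal.sqrt (Fintype.card ι) * K : NNReal) * dist x y := by
        push_cast
        ring

open Classical in
/-- Lemma 1.2: on a proper approximate length space multi-partitioned by
closed decompositions `M = M_k⁺ ∪ M_k⁻` with compact, coarsely transversal
intersection `N`, the tuple `f` of signed distance functions is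
`√q`-Lipschitz and proper. -/
theorem stmt5 {M : Type*} [MetricSpace M] [ProperSpace M] (q : ℕ)
    (hlen : ∀ x y : M, ∀ ε : ℝ, 0 < ε → ∃ γ : ℝ → M,
      ContinuousOn γ (Set.Icc 0 1) ∧ γ 0 = x ∧ γ 1 = y ∧
      ∀ s ∈ Set.Icc (0:ℝ) 1, ∀ t ∈ Set.Icc (0:ℝ) 1,
        dist (γ s) (γ t) ≤ (dist x y + ε) * |s - t|)
    (Mp Mm : Fin q → Set M)
    (hMp : ∀ k, IsClosed (Mp k)) (hMm : ∀ k, IsClosed (Mm k))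
    (hcover : ∀ k, Mp k ∪ Mm k = Set.univ)
    (N : Set M) (hN : N = ⋂ k, Mp k ∩ Mm k)
    (hNne : N.Nonempty) (hNc : IsCompact N)
    (hct : ∀ r : ℝ, 0 < r → ∃ s : ℝ, 0 < s ∧
      (⋂ k, Metric.cthickening r (Mp k ∩ Mm k)) ⊆ Metric.cthickening s N)
    (h : Fin q → M → ℝ)
    (hdef : ∀ k x, h k x = if x ∈ Mp k then Metric.infDist x (Mp k ∩ Mm k)
      else -Metric.infDist x (Mp k ∩ Mm k))
    (f : M → EuclideanSpace ℝ (Fin q)) (hf : ∀ x k, f x k = h k x) :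
    LipschitzWith (NNReal.sqrt q) f ∧
    ∀ K : Set (EuclideanSpace ℝ (Fin q)), IsCompact K → IsCompact (f ⁻¹' K) := by
  have hfk : ∀ x k, f x k = signedInfDist (Mp k) (Mp k ∩ Mm k) x :=
    fun x k => hf x k ▸ hdef k x
  have hlip : LipschitzWith (NNReal.sqrt q) f := by
    have hcoord (k : Fin q) : LipschitzWith 1 fun x => f x k := by
      rw [show (fun x => f x k) = signedInfDist (Mp k) (Mp k ∩ Mm k) from funext (hfk · k)]
      exact lipschitzWith_one_signedInfDist fun x hx y hy =>
        infDist_add_infDist_inter_le_dist (hMp k) (hMm k) (hcover k) (hlen x y) hx hy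
    simpa only [Fintype.card_fin, mul_one] using EuclideanSpace.lipschitzWith_of_forall_apply hcoord
  refine ⟨hlip, fun K hK => ?_⟩
  obtain ⟨r, hr⟩ := hK.isBounded.subset_closedBall 0
  obtain ⟨s, -, hs⟩ := hct (max r 1) (by positivity)
  refine (hNc.cthickening (r := s)).of_isClosed_subset (hK.isClosed.preimage hlip.continuous)
    fun x hx => ?_
  refine hs (mem_iInter.2 fun k => mem_cthickening_of_infDist_le ?_ (by positivity) ?_)
  · exact hNne.mono (hN ▸ iInter_subset _ k)
  calc infDist x (Mp k ∩ Mm k) = |f x k| := by rw [hfk, abs_signedInfDist]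
    _ ≤ ‖f x‖ := by simpa using PiLp.norm_apply_le (f x) k
    _ ≤ r := mem_closedBall_zero_iff.1 (hr hx)
    _ ≤ max r 1 := le_max_left _ _
end

section
/- Let q ≥ 2 and r > 0, and work in EuclideanSpace ℝ (Fin q). Define A := {x : x_0 ≤ 0 and ‖x‖ ≥ r} and B := {x : x_0 ≥ 0 and ‖x‖ ≥ r}, so that A ∪ B = ℝ^q ∖ B_r(0) and A ∩ B = {x : x_0 = 0 and ‖x‖ ≥ r}. Then for every t > 0 there exists s > 0 (indeed s = 3t works) such that U_t(A) ∩ U_t(B) ⊆ U_s(A ∩ B). In particular this decomposition of the complement of the open ball of radius r is coarsely excisive. -/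
/-!
A point within `t` of both pieces is within `t` of each closed half-space, so `|x₀| ≤ t`, and
within `t` of the outside of the ball, so `‖x‖ ≥ r - t`. Projecting `x` onto the hyperplane
`x₀ = 0` moves it by `|x₀| ≤ t` and leaves `‖x‖ ≥ r - 2t`; inside that hyperplane, which is a
nontrivial normed space because `q ≥ 2`, pushing the point radially out of the ball moves it by
at most `2t` more.
-/

open Metric Set

theorem exists_le_norm_dist_le_of_sub_le_norm {F : Type*} [NormedAddCommGroup F]
    [NormedSpace ℝ F] [Nontrivial F] {x : F} {r d : ℝ} (hd : 0 ≤ d) (hx : r - d ≤ ‖x‖) :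
    ∃ y : F, r ≤ ‖y‖ ∧ dist x y ≤ d := by
  rcases le_or_gt r ‖x‖ with hrx | hxr
  · exact ⟨x, hrx, by simpa using hd⟩
  rcases eq_or_ne x 0 with rfl | hx0
  · obtain ⟨y, hy⟩ := exists_norm_eq F (norm_nonneg _ |>.trans_lt hxr).le
    refine ⟨y, hy.ge, ?_⟩
    rw [dist_zero_left, hy]
    simpa using hx
  · have hxpos : 0 < ‖x‖ := norm_pos_iff.2 hx0
    have hscale : 1 ≤ r / ‖x‖ := (one_le_div hxpos).2 hxr.le
    refine ⟨(r / ‖x‖) • x, ?_, ?_⟩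
    · rw [norm_smul, Real.norm_of_nonneg (by linarith), div_mul_cancel₀ _ hxpos.ne']
    · have hsub : (r / ‖x‖) • x - x = (r / ‖x‖ - 1) • x := by rw [sub_smul, one_smul]
      calc dist x ((r / ‖x‖) • x) = (r / ‖x‖ - 1) * ‖x‖ := by
            rw [dist_comm, dist_eq_norm, hsub, norm_smul, Real.norm_of_nonneg (by linarith)]
        _ ≤ d := by rw [sub_one_mul, div_mul_cancel₀ _ hxpos.ne']; linarith

section Euclidean

variable {ι : Type*} [Fintype ι] [DecidableEq ι]

theorem EuclideanSpace.exists_apply_eq_zero_le_norm_dist_le {i j : ι} (hij : i ≠ j)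
    {x : EuclideanSpace ℝ ι} {r d : ℝ} (hd : 0 ≤ d) (hxi : |x i| ≤ d) (hx : r - d ≤ ‖x‖) :
    ∃ y : EuclideanSpace ℝ ι, y i = 0 ∧ r ≤ ‖y‖ ∧ dist x y ≤ 3 * d := by
  let H := LinearMap.ker (EuclideanSpace.projₗ (𝕜 := ℝ) (ι := ι) i)
  have : Nontrivial H :=
    ⟨⟨⟨EuclideanSpace.single j 1, by simp [H, hij]⟩, 0, by simp [Subtype.ext_iff]⟩⟩
  let x' : H := ⟨x - EuclideanSpace.single i (x i), by simp [H]⟩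
  have hxx' : dist x x' = |x i| := by simp [x']
  have hx' : r - 2 * d ≤ ‖x'‖ := by
    linarith [norm_sub_norm_le x x', dist_eq_norm x x', Submodule.coe_norm x']
  obtain ⟨y, hyr, hx'y⟩ := exists_le_norm_dist_le_of_sub_le_norm (by linarith) hx'
  refine ⟨y, y.2, hyr, ?_⟩
  calc dist x y ≤ dist x x' + dist (x' : EuclideanSpace ℝ ι) y := dist_triangle _ _ _
    _ ≤ 3 * d := by rw [hxx', ← Subtype.dist_eq]; linarith

theorem EuclideanSpace.cthickening_inter_cthickening_subset {i j : ι} (hij : i ≠ j) (r : ℝ)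
    {t : ℝ} (ht : 0 ≤ t) :
    cthickening t {x : EuclideanSpace ℝ ι | x i ≤ 0 ∧ r ≤ ‖x‖} ∩
        cthickening t {x : EuclideanSpace ℝ ι | 0 ≤ x i ∧ r ≤ ‖x‖} ⊆
      cthickening (3 * t) {x : EuclideanSpace ℝ ι | x i = 0 ∧ r ≤ ‖x‖} := by
  rintro x ⟨hxA, hxB⟩
  rw [cthickening_eq_iInter_cthickening, mem_iInter₂]
  intro ε hε
  have hδ : t < ε / 3 := by linarith
  obtain ⟨a, ⟨hai, har⟩, hxa⟩ :=
    mem_thickening_iff.1 (cthickening_subset_thickening' (by linarith) hδ _ hxA)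
  obtain ⟨b, ⟨hbi, -⟩, hxb⟩ :=
    mem_thickening_iff.1 (cthickening_subset_thickening' (by linarith) hδ _ hxB)
  have hxai := PiLp.dist_apply_le x a i
  have hxbi := PiLp.dist_apply_le x b i
  rw [Real.dist_eq] at hxai hxbi
  have hxi : |x i| ≤ ε / 3 :=
    abs_le.2 ⟨by linarith [(abs_le.1 hxbi).1], by linarith [(abs_le.1 hxai).2]⟩
  have hx : r - ε / 3 ≤ ‖x‖ := by linarith [norm_sub_norm_le a x, dist_eq_norm a x, dist_comm x a]
  obtain ⟨y, hyi, hyr, hxy⟩ :=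
    EuclideanSpace.exists_apply_eq_zero_le_norm_dist_le hij (by linarith) hxi hx
  exact mem_cthickening_of_dist_le x y ε _ ⟨hyi, hyr⟩ (by linarith)

end Euclidean

/-- For `q ≥ 2` and `r > 0`, the decomposition of `ℝ^q ∖ B_r(0)` into the two
pieces `A = {x₀ ≤ 0, ‖x‖ ≥ r}` and `B = {x₀ ≥ 0, ‖x‖ ≥ r}` is coarsely
excisive; indeed `U_t(A) ∩ U_t(B) ⊆ U_{3t}(A ∩ B)` for every `t > 0`. -/
theorem stmt9 (q : ℕ) (hq : 2 ≤ q) (r : ℝ)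
    (A B : Set (EuclideanSpace ℝ (Fin q)))
    (hA : A = {x : EuclideanSpace ℝ (Fin q) | x ⟨0, by omega⟩ ≤ 0 ∧ r ≤ ‖x‖})
    (hB : B = {x : EuclideanSpace ℝ (Fin q) | 0 ≤ x ⟨0, by omega⟩ ∧ r ≤ ‖x‖}) :
    A ∪ B = (Metric.ball (0 : EuclideanSpace ℝ (Fin q)) r)ᶜ ∧
    A ∩ B = {x : EuclideanSpace ℝ (Fin q) | x ⟨0, by omega⟩ = 0 ∧ r ≤ ‖x‖} ∧
    ∀ t : ℝ, 0 < t →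
      Metric.cthickening t A ∩ Metric.cthickening t B ⊆
        Metric.cthickening (3 * t) (A ∩ B) := by
  subst hA hB
  have hAB : {x : EuclideanSpace ℝ (Fin q) | x ⟨0, by omega⟩ ≤ 0 ∧ r ≤ ‖x‖} ∩
      {x | 0 ≤ x ⟨0, by omega⟩ ∧ r ≤ ‖x‖} = {x | x ⟨0, by omega⟩ = 0 ∧ r ≤ ‖x‖} := by
    ext x
    simp only [mem_inter_iff, mem_ofPred_eq, le_antisymm_iff]
    tauto
  refine ⟨?_, hAB, fun t ht => ?_⟩
  · ext x
    simp [← or_and_right, le_total]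
  · rw [hAB]
    exact EuclideanSpace.cthickening_inter_cthickening_subset (j := ⟨1, by omega⟩)
      (Fin.ne_of_val_ne zero_ne_one) r ht.le
end

section
/- Let M and Y be metric spaces equipped with Borel measures μ and ν, let f : M → Y be continuous, and let R ≥ 0. Let V : L²(M,μ;ℂ) → L²(Y,ν;ℂ) be a continuous linear map which covers f with propagation R: for every s ∈ L²(μ) and every closed set C ⊆ M such that s = 0 μ-a.e. outside C, one has Vs = 0 ν-a.e. outside U_R(f(C)). Then the Hilbert space adjoint V* : L²(ν) → L²(μ) satisfies: for every u ∈ L²(ν) and every closed set D ⊆ Y such that u = 0 ν-a.e. outside D, one has V*u = 0 μ-a.e. outside f⁻¹(U_R(D)). -/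
/-! If `s` is supported in a closed set `C` with `U_R(f(C))` disjoint from `D`, then
`⟪s, V*u⟫ = ⟪Vs, u⟫ = 0`; testing with `s = 𝟙_C · V*u` gives `‖s‖² = 0`, so `V*u` vanishes on `C`.
The complement of `f⁻¹(U_R(D))` is the countable union of such closed sets, namely the preimages
of the complements of the open thickenings of `D` of rational radius `q > max 0 R`. -/

namespace MeasureTheory.L2

variable {α β 𝕜 E F : Type*} [MeasurableSpace α] [MeasurableSpace β] {μ : Measure α}
  {ν : Measure β} [RCLike 𝕜] [NormedAddCommGroup E] [InnerProductSpace 𝕜 E]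
  [NormedAddCommGroup F] [InnerProductSpace 𝕜 F]

theorem inner_eq_zero_of_ae_eq_zero_or {f g : Lp E 2 μ} (h : ∀ᵐ x ∂μ, f x = 0 ∨ g x = 0) :
    inner 𝕜 f g = 0 := by
  rw [inner_def]
  refine integral_eq_zero_of_ae (h.mono fun x hx => ?_)
  rcases hx with hx | hx <;> simp [hx]

theorem ae_eq_zero_on_of_forall_inner_eq_zero {w : Lp E 2 μ} {C : Set α} (hC : MeasurableSet C)
    (h : ∀ s : Lp E 2 μ, (∀ᵐ x ∂μ, x ∉ C → s x = 0) → inner 𝕜 s w = 0) :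
    ∀ᵐ x ∂μ, x ∈ C → w x = 0 := by
  have hmem : MemLp (C.indicator w) 2 μ := (Lp.memLp w).indicator hC
  set s : Lp E 2 μ := hmem.toLp _
  have hs : s =ᵐ[μ] C.indicator w := hmem.coeFn_toLp
  have hs_supp : ∀ᵐ x ∂μ, x ∉ C → s x = 0 := by
    filter_upwards [hs] with x hx hxC
    rw [hx, Set.indicator_of_notMem hxC]
  have hss : inner 𝕜 s s = inner 𝕜 s w := by
    rw [inner_def, inner_def]
    refine integral_congr_ae (hs.mono fun x hx => ?_)
    by_cases hxC : x ∈ C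
    · simp only [hx, Set.indicator_of_mem hxC]
    · simp [hx, Set.indicator_of_notMem hxC]
  have hs_zero : s = 0 := inner_self_eq_zero.mp (hss.trans (h s hs_supp))
  filter_upwards [Lp.coeFn_zero E 2 μ, hs_zero ▸ hs] with x h0 hx hxC
  rw [← Set.indicator_of_mem hxC w, ← hx, h0, Pi.zero_apply]

theorem adjoint_ae_eq_zero_on_of_disjoint [CompleteSpace E] [CompleteSpace F]
    (V : Lp E 2 μ →L[𝕜] Lp F 2 ν) {C : Set α} (hC : MeasurableSet C) {B D : Set β}
    (hBD : Disjoint B D)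
    (hV : ∀ s : Lp E 2 μ, (∀ᵐ x ∂μ, x ∉ C → s x = 0) → ∀ᵐ y ∂ν, y ∉ B → V s y = 0)
    {u : Lp F 2 ν} (hu : ∀ᵐ y ∂ν, y ∉ D → u y = 0) :
    ∀ᵐ x ∂μ, x ∈ C → V.adjoint u x = 0 := by
  refine ae_eq_zero_on_of_forall_inner_eq_zero (𝕜 := 𝕜) hC fun s hs => ?_
  rw [ContinuousLinearMap.adjoint_inner_right]
  refine inner_eq_zero_of_ae_eq_zero_or ?_
  filter_upwards [hV s hs, hu] with y hVs hu
  by_cases hyB : y ∈ B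
  · exact Or.inr (hu (hBD.notMem_of_mem_left hyB))
  · exact Or.inl (hVs hyB)

end MeasureTheory.L2

namespace Metric

variable {X : Type*} [PseudoEMetricSpace X]

theorem exists_rat_notMem_thickening_of_notMem_cthickening {x : X} {R : ℝ} {D : Set X}
    (hx : x ∉ cthickening R D) : ∃ q : ℚ, max 0 R < q ∧ x ∉ thickening q D := by
  rw [cthickening_eq_iInter_thickening'' R D] at hx
  simp only [Set.mem_iInter, not_forall] at hx
  obtain ⟨ε, hε, hxε⟩ := hx
  obtain ⟨q, hq, hqε⟩ := exists_rat_btwn hε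
  exact ⟨q, hq, fun hxq => hxε (thickening_mono hqε.le D hxq)⟩

theorem disjoint_cthickening_compl_thickening {R δ : ℝ} (hδ : max 0 R < δ) (D : Set X) :
    Disjoint (cthickening R (thickening δ D)ᶜ) D := by
  have hsub := cthickening_subset_thickening' ((le_max_left 0 R).trans_lt hδ)
    ((le_max_right 0 R).trans_lt hδ) (thickening δ D)ᶜ
  exact Set.subset_compl_iff_disjoint_right.mp
    (hsub.trans (thickening_compl_thickening_self_subset_compl δ D))

end Metric

open MeasureTheory Metric in
theorem stmt13_general {M Y : Type*} [MetricSpace M] [MetricSpace Y]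
    [MeasurableSpace M] [BorelSpace M] [MeasurableSpace Y]
    (μ : Measure M) (ν : Measure Y) (f : M → Y) (hf : Continuous f)
    (R : ℝ)
    (V : Lp ℂ 2 μ →L[ℂ] Lp ℂ 2 ν)
    (hV : ∀ (s : Lp ℂ 2 μ) (C : Set M), IsClosed C →
      (∀ᵐ p ∂μ, p ∉ C → s p = 0) →
      (∀ᵐ y ∂ν, y ∉ cthickening R (f '' C) → V s y = 0))
    (u : Lp ℂ 2 ν) (D : Set Y)
    (hu : ∀ᵐ y ∂ν, y ∉ D → u y = 0) :
    ∀ᵐ p ∂μ, p ∉ f ⁻¹' (cthickening R D) →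
      (ContinuousLinearMap.adjoint V) u p = 0 := by
  have hvanish : ∀ q : ℚ, max 0 R < q →
      ∀ᵐ p ∂μ, f p ∉ thickening q D → (ContinuousLinearMap.adjoint V) u p = 0 := by
    intro q hq
    have hC : IsClosed (f ⁻¹' (thickening q D)ᶜ) := isOpen_thickening.isClosed_compl.preimage hf
    have hdisj : Disjoint (cthickening R (f '' (f ⁻¹' (thickening q D)ᶜ))) D :=
      (disjoint_cthickening_compl_thickening hq D).mono_left
        (cthickening_subset_of_subset R (Set.image_preimage_subset f _))
    exact L2.adjoint_ae_eq_zero_on_of_disjoint V hC.measurableSet hdisj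
      (fun s hs => hV s _ hC hs) hu
  filter_upwards [ae_all_iff.2 fun q => Filter.eventually_imp_distrib_left.2 (hvanish q)]
    with p hp hpD
  obtain ⟨q, hq, hpq⟩ := exists_rat_notMem_thickening_of_notMem_cthickening hpD
  exact hp q hq hpq

open MeasureTheory Metric in
/-- If `V : L²(μ) → L²(ν)` covers the continuous map `f : M → Y` with
propagation `R` (sections supported in a closed set `C` are mapped to sections
supported in the closed `R`-neighborhood of `f(C)`), then the adjoint `V*`
maps sections supported in a closed set `D ⊆ Y` to sections supported in
`f⁻¹(U_R(D))`. -/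
theorem stmt13 {M Y : Type*} [MetricSpace M] [MetricSpace Y]
    [MeasurableSpace M] [BorelSpace M] [MeasurableSpace Y] [BorelSpace Y]
    (μ : Measure M) (ν : Measure Y) (f : M → Y) (hf : Continuous f)
    (R : ℝ) (hR : 0 ≤ R)
    (V : Lp ℂ 2 μ →L[ℂ] Lp ℂ 2 ν)
    (hV : ∀ (s : Lp ℂ 2 μ) (C : Set M), IsClosed C →
      (∀ᵐ p ∂μ, p ∉ C → s p = 0) →
      (∀ᵐ y ∂ν, y ∉ cthickening R (f '' C) → V s y = 0))
    (u : Lp ℂ 2 ν) (D : Set Y) (hD : IsClosed D)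
    (hu : ∀ᵐ y ∂ν, y ∉ D → u y = 0) :
    ∀ᵐ p ∂μ, p ∉ f ⁻¹' (cthickening R D) →
      (ContinuousLinearMap.adjoint V) u p = 0 :=
  stmt13_general μ ν f hf R V hV u D hu
end
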